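/- Let κ ≥ 0, λ1, λ2, α1, α2 ∈ ℝ, let ρ0 : [0,1] → ℝ be continuous and nonvanishing, and let v, m, y : [0,1] → ℝ be twice continuously differentiable with |y'(t)| < 1 on [0,1], satisfying on [0,1]: v' = −λ1 y, m' = −v √(1−(y')²) − λ2 y', m − κ m'' = y''/√(1−(y')²) − α1/ρ0, together with v(1) = α2 and m(1) = 0. Assume 1 + κ α2 y'(t) + κ λ1 y'(t) I₁y(t) − κ λ2 √(1−y'(t)²) ≠ 0 for all t. Then y satisfies G(λ, α)y(t) = 0 for all t ∈ [0,1], where G(λ,α)y(t) := y''(t) − √(1−y'(t)²) · [α1/ρ0(t) + α2 J₁y(t) + λ1 (J₂y(t) − κ y(t)√(1−y'(t)²)) + λ2 I₁y'(t)] / [1 + κ α2 y'(t) + κ λ1 y'(t) I₁y(t) − κ λ2 √(1−y'(t)²)]. -/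

import Mathlib

/-!
Integrating `v' = -λ₁ y` and `m' = -v √(1 - y'²) - λ₂ y'` from `t` to the free end, where
`v(1) = α₂` and `m(1) = 0`, gives `v = α₂ + λ₁ I₁y` and `m = α₂ J₁y + λ₁ J₂y + λ₂ I₁y'`.
Differentiating the second equation once more gives
`m'' = λ₁ y √(1 - y'²) + v y' y'' / √(1 - y'²) - λ₂ y''`. Substituting both into the
constitutive law `m - κ m'' = y'' / √(1 - y'²) - α₁/ρ₀` leaves an equation that is linear in
`y''`, whose coefficient is the denominator of `G`.
-/

open Set

/-- `I₁ z (t) = ∫_t^1 z(τ) dτ`. -/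
noncomputable def I1 (z : ℝ → ℝ) (t : ℝ) : ℝ := ∫ τ in t..(1:ℝ), z τ

/-- `J₁ y (t) = ∫_t^1 √(1 − y'(τ)²) dτ`. -/
noncomputable def J1 (y : ℝ → ℝ) (t : ℝ) : ℝ :=
  ∫ τ in t..(1:ℝ), Real.sqrt (1 - (deriv y τ) ^ 2)

/-- `J₂ y (t) = ∫_t^1 ∫_τ^1 y(η) √(1 − y'(τ)²) dη dτ`. -/
noncomputable def J2 (y : ℝ → ℝ) (t : ℝ) : ℝ :=
  ∫ τ in t..(1:ℝ), ∫ η in τ..(1:ℝ), y η * Real.sqrt (1 - (deriv y τ) ^ 2)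

/-- The non-linear integro-differential operator `G(λ, α)` of the imperfect rod. -/
noncomputable def G (κ l1 l2 a1 a2 : ℝ) (ρ0 : ℝ → ℝ) (y : ℝ → ℝ) (t : ℝ) : ℝ :=
  deriv (deriv y) t - Real.sqrt (1 - (deriv y t) ^ 2) *
    ((a1 / ρ0 t + a2 * J1 y t
        + l1 * (J2 y t - κ * y t * Real.sqrt (1 - (deriv y t) ^ 2))
        + l2 * I1 (deriv y) t) /
     (1 + κ * a2 * deriv y t + κ * l1 * deriv y t * I1 y t
        - κ * l2 * Real.sqrt (1 - (deriv y t) ^ 2)))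

lemma deriv_eq_of_eqOn_Icc {f g : ℝ → ℝ} {a b t : ℝ} (hab : a < b) (ht : t ∈ Icc a b)
    (hf : DifferentiableAt ℝ f t) (hg : DifferentiableAt ℝ g t) (h : EqOn f g (Icc a b)) :
    deriv f t = deriv g t := by
  have hu := uniqueDiffOn_Icc hab t ht
  rw [← hf.derivWithin hu, ← hg.derivWithin hu, derivWithin_congr h (h ht)]

lemma HasDerivAt.sqrt_one_sub_sq {f : ℝ → ℝ} {f' t : ℝ} (hf : HasDerivAt f f' t)
    (ht : |f t| < 1) :
    HasDerivAt (fun τ => √(1 - f τ ^ 2)) (-(f t * f') / √(1 - f t ^ 2)) t := by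
  have hpos : 0 < 1 - f t ^ 2 := by nlinarith [abs_lt.mp ht]
  convert ((hf.fun_pow 2).const_sub 1).sqrt hpos.ne' using 1
  field_simp
  ring

lemma I1_congr {z w : ℝ → ℝ} {t : ℝ} (ht : t ∈ Icc (0 : ℝ) 1) (h : EqOn z w (Icc 0 1)) :
    I1 z t = I1 w t := by
  refine intervalIntegral.integral_congr (h.mono ?_)
  rw [uIcc_of_le ht.2]
  exact Icc_subset_Icc ht.1 le_rfl

lemma I1_deriv {f : ℝ → ℝ} (hf : ContDiff ℝ 1 f) (t : ℝ) : I1 (deriv f) t = f 1 - f t :=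
  intervalIntegral.integral_deriv_eq_sub (fun x _ => hf.differentiable one_ne_zero x)
    ((hf.continuous_deriv le_rfl).intervalIntegrable _ _)

lemma I1_const_mul (c : ℝ) (z : ℝ → ℝ) (t : ℝ) : I1 (fun τ => c * z τ) t = c * I1 z t :=
  intervalIntegral.integral_const_mul c z

lemma eq_sub_I1_of_eqOn_deriv {f g : ℝ → ℝ} (hf : ContDiff ℝ 1 f) {t : ℝ}
    (ht : t ∈ Icc (0 : ℝ) 1) (h : EqOn (deriv f) g (Icc 0 1)) : f t = f 1 - I1 g t := by
  rw [← I1_congr ht h, I1_deriv hf]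
  ring

lemma hasDerivAt_I1 {z : ℝ → ℝ} (hz : Continuous z) (t : ℝ) : HasDerivAt (I1 z) (-z t) t :=
  intervalIntegral.integral_hasDerivAt_left (hz.intervalIntegrable t 1)
    (hz.stronglyMeasurableAtFilter _ _) hz.continuousAt

lemma J2_eq_I1 (y : ℝ → ℝ) (t : ℝ) :
    J2 y t = I1 (fun τ => I1 y τ * √(1 - deriv y τ ^ 2)) t := by
  simp only [J2, I1, intervalIntegral.integral_mul_const]

lemma I1_moment_deriv {y : ℝ → ℝ} (hy : Continuous y) (hy' : Continuous (deriv y))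
    (a2 l1 l2 t : ℝ) :
    I1 (fun τ => -(a2 + l1 * I1 y τ) * √(1 - deriv y τ ^ 2) - l2 * deriv y τ) t
      = -(a2 * J1 y t + l1 * J2 y t + l2 * I1 (deriv y) t) := by
  have hs : Continuous fun τ => √(1 - deriv y τ ^ 2) := (continuous_const.sub (hy'.pow 2)).sqrt
  have hI : Continuous (I1 y) := continuous_iff_continuousAt.2 fun τ =>
    (hasDerivAt_I1 hy τ).continuousAt
  have hsplit : (fun τ => -(a2 + l1 * I1 y τ) * √(1 - deriv y τ ^ 2) - l2 * deriv y τ)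
      = fun τ => -(a2 * √(1 - deriv y τ ^ 2)) - (l1 * (I1 y τ * √(1 - deriv y τ ^ 2))
        + l2 * deriv y τ) := by
    funext τ; ring
  have i1 : IntervalIntegrable (fun τ => -(a2 * √(1 - deriv y τ ^ 2)))
      MeasureTheory.volume t 1 :=
    (continuous_const.mul hs).neg.intervalIntegrable _ _
  have i2 : IntervalIntegrable (fun τ => l1 * (I1 y τ * √(1 - deriv y τ ^ 2)))
      MeasureTheory.volume t 1 :=
    (continuous_const.mul (hI.mul hs)).intervalIntegrable _ _
  have i3 : IntervalIntegrable (fun τ => l2 * deriv y τ) MeasureTheory.volume t 1 :=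
    (continuous_const.mul hy').intervalIntegrable _ _
  rw [hsplit, J2_eq_I1]
  simp only [I1, J1] at i2 ⊢
  rw [intervalIntegral.integral_sub i1 (i2.add i3), intervalIntegral.integral_neg,
    intervalIntegral.integral_add i2 i3]
  simp only [intervalIntegral.integral_const_mul]
  ring

theorem stmt18_general (κ l1 l2 a1 a2 : ℝ)
    (ρ0 : ℝ → ℝ)
    (v m y : ℝ → ℝ)
    (hv : ContDiff ℝ 2 v) (hm : ContDiff ℝ 2 m) (hy : ContDiff ℝ 2 y)
    (hy' : ∀ t ∈ Icc (0:ℝ) 1, |deriv y t| < 1)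
    (e1 : ∀ t ∈ Icc (0:ℝ) 1, deriv v t = -l1 * y t)
    (e2 : ∀ t ∈ Icc (0:ℝ) 1,
      deriv m t = -v t * Real.sqrt (1 - (deriv y t) ^ 2) - l2 * deriv y t)
    (e3 : ∀ t ∈ Icc (0:ℝ) 1,
      m t - κ * deriv (deriv m) t
        = deriv (deriv y) t / Real.sqrt (1 - (deriv y t) ^ 2) - a1 / ρ0 t)
    (hv1 : v 1 = a2) (hm1 : m 1 = 0)
    (hden : ∀ t ∈ Icc (0:ℝ) 1,
      1 + κ * a2 * deriv y t + κ * l1 * deriv y t * I1 y t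
        - κ * l2 * Real.sqrt (1 - (deriv y t) ^ 2) ≠ 0) :
    ∀ t ∈ Icc (0:ℝ) 1, G κ l1 l2 a1 a2 ρ0 y t = 0 := by
  have hy1 : ContDiff ℝ 1 (deriv y) := hy.deriv'
  have hv_eq : ∀ t ∈ Icc (0:ℝ) 1, v t = a2 + l1 * I1 y t := fun t ht => by
    rw [eq_sub_I1_of_eqOn_deriv (hv.of_le one_le_two) ht e1, hv1, I1_const_mul]
    ring
  have hm' : EqOn (deriv m)
      (fun τ => -(a2 + l1 * I1 y τ) * √(1 - deriv y τ ^ 2) - l2 * deriv y τ) (Icc 0 1) :=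
    fun τ hτ => by rw [e2 τ hτ, hv_eq τ hτ]
  intro t ht
  have hm_eq : m t = a2 * J1 y t + l1 * J2 y t + l2 * I1 (deriv y) t := by
    rw [eq_sub_I1_of_eqOn_deriv (hm.of_le one_le_two) ht hm',
      I1_moment_deriv hy.continuous hy1.continuous, hm1]
    ring
  have hs : 0 < √(1 - deriv y t ^ 2) := Real.sqrt_pos.mpr (by nlinarith [abs_lt.mp (hy' t ht)])
  have hslope : HasDerivAt (fun τ => -v τ * √(1 - deriv y τ ^ 2) - l2 * deriv y τ)
      (l1 * y t * √(1 - deriv y t ^ 2)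
        + v t * deriv y t * deriv (deriv y) t / √(1 - deriv y t ^ 2)
        - l2 * deriv (deriv y) t) t := by
    have hy't := (hy1.differentiable one_ne_zero t).hasDerivAt
    refine (((hv.differentiable two_ne_zero t).hasDerivAt.neg.mul
      (hy't.sqrt_one_sub_sq (hy' t ht))).sub (hy't.const_mul l2)).congr_deriv ?_
    rw [e1 t ht, Pi.neg_apply]
    ring
  have hm'' : deriv (deriv m) t = l1 * y t * √(1 - deriv y t ^ 2)
      + v t * deriv y t * deriv (deriv y) t / √(1 - deriv y t ^ 2)
      - l2 * deriv (deriv y) t := by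
    rw [deriv_eq_of_eqOn_Icc zero_lt_one ht (hm.deriv'.differentiable one_ne_zero t)
      hslope.differentiableAt e2, hslope.deriv]
  have key := e3 t ht
  rw [hm'', hm_eq, hv_eq t ht] at key
  rw [G, sub_eq_zero, mul_div_assoc', eq_div_iff (hden t ht)]
  field_simp at key
  linear_combination -key

/-- the equilibrium system of the imperfect rotating axially compressed
non-local rod reduces to the single integro-differential equation `G(λ, α)y = 0`. -/
theorem stmt18 (κ l1 l2 a1 a2 : ℝ) (hκ : 0 ≤ κ)
    (ρ0 : ℝ → ℝ) (hρc : Continuous ρ0) (hρ0 : ∀ t ∈ Icc (0:ℝ) 1, ρ0 t ≠ 0)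
    (v m y : ℝ → ℝ)
    (hv : ContDiff ℝ 2 v) (hm : ContDiff ℝ 2 m) (hy : ContDiff ℝ 2 y)
    (hy' : ∀ t ∈ Icc (0:ℝ) 1, |deriv y t| < 1)
    (e1 : ∀ t ∈ Icc (0:ℝ) 1, deriv v t = -l1 * y t)
    (e2 : ∀ t ∈ Icc (0:ℝ) 1,
      deriv m t = -v t * Real.sqrt (1 - (deriv y t) ^ 2) - l2 * deriv y t)
    (e3 : ∀ t ∈ Icc (0:ℝ) 1,
      m t - κ * deriv (deriv m) t
        = deriv (deriv y) t / Real.sqrt (1 - (deriv y t) ^ 2) - a1 / ρ0 t)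
    (hv1 : v 1 = a2) (hm1 : m 1 = 0)
    (hden : ∀ t ∈ Icc (0:ℝ) 1,
      1 + κ * a2 * deriv y t + κ * l1 * deriv y t * I1 y t
        - κ * l2 * Real.sqrt (1 - (deriv y t) ^ 2) ≠ 0) :
    ∀ t ∈ Icc (0:ℝ) 1, G κ l1 l2 a1 a2 ρ0 y t = 0 :=
  stmt18_general κ l1 l2 a1 a2 ρ0 v m y hv hm hy hy' e1 e2 e3 hv1 hm1 hden
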